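/- Let H be a locally compact Hausdorff topological group acting freely and properly on the right of a topological groupoid Γ by automorphisms. Then the quotient groupoid Γ/H acts on the left of the space Γ, with fibre map ρ : Γ → Γ⁰/H given by ρ(y) = r(y)·H, via (xH)·y = xy whenever s(x) = r(y). In particular: this formula is well defined (if x' ∈ xH satisfies s(x') = r(y') for y' = y, the product is unchanged as required by the definition of a groupoid action), ρ is continuous and open, ρ((xH)·y) = r(xH), units act trivially, the action is compatible with the multiplication of Γ/H, and the action map is continuous. -/

import Mathlib

open MeasureTheory Filter Topology

/-- A topological groupoid: a space `Γ` with a set of units, continuous open range and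
source maps onto the units, a (partially meaningful, totalized) continuous multiplication
defined for composable pairs, and a continuous inversion. -/
structure TopGroupoid (Γ : Type*) [TopologicalSpace Γ] where
  unit : Set Γ
  rng : Γ → Γ
  src : Γ → Γ
  mul : Γ → Γ → Γ
  inv : Γ → Γ
  rng_mem : ∀ x, rng x ∈ unit
  src_mem : ∀ x, src x ∈ unit
  rng_unit : ∀ u ∈ unit, rng u = u
  src_unit : ∀ u ∈ unit, src u = u
  continuous_rng : Continuous rng
  continuous_src : Continuous src
  open_rng : ∀ U : Set Γ, IsOpen U → ∃ V : Set Γ, IsOpen V ∧ rng '' U = V ∩ unit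
  open_src : ∀ U : Set Γ, IsOpen U → ∃ V : Set Γ, IsOpen V ∧ src '' U = V ∩ unit
  continuous_mul : ContinuousOn (fun p : Γ × Γ => mul p.1 p.2) {p : Γ × Γ | src p.1 = rng p.2}
  continuous_inv : Continuous inv
  rng_mul : ∀ x y, src x = rng y → rng (mul x y) = rng x
  src_mul : ∀ x y, src x = rng y → src (mul x y) = src y
  mul_assoc' : ∀ x y z, src x = rng y → src y = rng z → mul (mul x y) z = mul x (mul y z)
  rng_mul_self : ∀ x, mul (rng x) x = x
  mul_src_self : ∀ x, mul x (src x) = x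
  inv_inv' : ∀ x, inv (inv x) = x
  src_inv : ∀ x, src (inv x) = rng x
  rng_inv : ∀ x, rng (inv x) = src x
  inv_mul' : ∀ x, mul (inv x) x = src x
  mul_inv' : ∀ x, mul x (inv x) = rng x

section Actions

variable {Γ : Type*} [TopologicalSpace Γ]

/-- A (continuous) right action of a group `H` on a topological groupoid by automorphisms. -/
structure GroupRightAction (𝒢 : TopGroupoid Γ) (H : Type*) [TopologicalSpace H] [Group H] where
  act : Γ → H → Γ
  continuous_act : Continuous fun p : Γ × H => act p.1 p.2
  act_one : ∀ x, act x 1 = x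
  act_mul : ∀ x (h k : H), act (act x h) k = act x (h * k)
  unit_act : ∀ u ∈ 𝒢.unit, ∀ h : H, act u h ∈ 𝒢.unit
  src_act : ∀ x h, 𝒢.src (act x h) = act (𝒢.src x) h
  rng_act : ∀ x h, 𝒢.rng (act x h) = act (𝒢.rng x) h
  mul_act : ∀ x y h, 𝒢.src x = 𝒢.rng y → 𝒢.mul (act x h) (act y h) = act (𝒢.mul x y) h
  inv_act : ∀ x h, 𝒢.inv (act x h) = act (𝒢.inv x) h

namespace GroupRightAction

variable {𝒢 : TopGroupoid Γ} {H : Type*} [TopologicalSpace H] [Group H]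

/-- The action is free. -/
def Free (A : GroupRightAction 𝒢 H) : Prop := ∀ x h, A.act x h = x → h = 1

/-- The action is proper: `(x,h) ↦ (x·h, x)` has compact preimages of compact sets. -/
def Proper (A : GroupRightAction 𝒢 H) : Prop :=
  ∀ K : Set (Γ × Γ), IsCompact K → IsCompact {p : Γ × H | (A.act p.1 p.2, p.1) ∈ K}

/-- The orbit equivalence relation. -/
def setoid (A : GroupRightAction 𝒢 H) : Setoid Γ where
  r x y := ∃ h : H, A.act x h = y
  iseqv := by
    refine ⟨fun x => ⟨1, A.act_one x⟩, ?_, ?_⟩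
    · rintro x y ⟨h, rfl⟩
      exact ⟨h⁻¹, by rw [A.act_mul]; simp [A.act_one]⟩
    · rintro x y z ⟨h, rfl⟩ ⟨k, rfl⟩
      exact ⟨h * k, (A.act_mul x h k).symm⟩

end GroupRightAction

/-- A (continuous) left action of a group `G` on a topological groupoid by automorphisms. -/
structure GroupLeftAction (𝒢 : TopGroupoid Γ) (G : Type*) [TopologicalSpace G] [Group G] where
  act : G → Γ → Γ
  continuous_act : Continuous fun p : G × Γ => act p.1 p.2
  one_act : ∀ x, act 1 x = x
  act_act : ∀ (t u : G) (x : Γ), act t (act u x) = act (t * u) x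
  unit_act : ∀ u ∈ 𝒢.unit, ∀ t : G, act t u ∈ 𝒢.unit
  src_act : ∀ t x, 𝒢.src (act t x) = act t (𝒢.src x)
  rng_act : ∀ t x, 𝒢.rng (act t x) = act t (𝒢.rng x)
  mul_act : ∀ t x y, 𝒢.src x = 𝒢.rng y → 𝒢.mul (act t x) (act t y) = act t (𝒢.mul x y)
  inv_act : ∀ t x, 𝒢.inv (act t x) = act t (𝒢.inv x)

namespace GroupLeftAction

variable {𝒢 : TopGroupoid Γ} {G : Type*} [TopologicalSpace G] [Group G]

/-- The action is free. -/
def Free (A : GroupLeftAction 𝒢 G) : Prop := ∀ t x, A.act t x = x → t = 1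

/-- The action is proper: `(t,x) ↦ (t·x, x)` has compact preimages of compact sets. -/
def Proper (A : GroupLeftAction 𝒢 G) : Prop :=
  ∀ K : Set (Γ × Γ), IsCompact K → IsCompact {p : G × Γ | (A.act p.1 p.2, p.2) ∈ K}

/-- The orbit equivalence relation. -/
def setoid (A : GroupLeftAction 𝒢 G) : Setoid Γ where
  r x y := ∃ t : G, A.act t x = y
  iseqv := by
    refine ⟨fun x => ⟨1, A.one_act x⟩, ?_, ?_⟩
    · rintro x y ⟨t, rfl⟩
      exact ⟨t⁻¹, by rw [A.act_act]; simp [A.one_act]⟩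
    · rintro x y z ⟨t, rfl⟩ ⟨u, rfl⟩
      exact ⟨u * t, (A.act_act u t x).symm⟩

end GroupLeftAction

/-- A left action of a topological groupoid `𝒢` on a space `Ω`, with fibre map `ρ`. -/
structure GroupoidLeftAction (𝒢 : TopGroupoid Γ) (Ω : Type*) [TopologicalSpace Ω] where
  ρ : Ω → Γ
  act : Γ → Ω → Ω
  ρ_mem : ∀ u, ρ u ∈ 𝒢.unit
  continuous_ρ : Continuous ρ
  ρ_surj : ∀ v ∈ 𝒢.unit, ∃ u, ρ u = v
  open_ρ : ∀ U : Set Ω, IsOpen U → ∃ V : Set Γ, IsOpen V ∧ ρ '' U = V ∩ 𝒢.unit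
  continuous_act : ContinuousOn (fun p : Γ × Ω => act p.1 p.2) {p : Γ × Ω | 𝒢.src p.1 = ρ p.2}
  ρ_act : ∀ x u, 𝒢.src x = ρ u → ρ (act x u) = 𝒢.rng x
  unit_act : ∀ u, act (ρ u) u = u
  act_act : ∀ x y u, 𝒢.src y = ρ u → 𝒢.src x = 𝒢.rng y → act x (act y u) = act (𝒢.mul x y) u

namespace GroupoidLeftAction

variable {𝒢 : TopGroupoid Γ} {Ω : Type*} [TopologicalSpace Ω]

/-- The action is free. -/
def Free (A : GroupoidLeftAction 𝒢 Ω) : Prop :=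
  ∀ x u, 𝒢.src x = A.ρ u → A.act x u = u → x ∈ 𝒢.unit

/-- The action is proper: `(x,u) ↦ (x·u, u)` on the composable set has compact preimages of
compact sets. -/
def Proper (A : GroupoidLeftAction 𝒢 Ω) : Prop :=
  ∀ K : Set (Ω × Ω), IsCompact K →
    IsCompact {p : Γ × Ω | 𝒢.src p.1 = A.ρ p.2 ∧ (A.act p.1 p.2, p.2) ∈ K}

/-- The orbit equivalence relation on `Ω`. -/
def setoid (A : GroupoidLeftAction 𝒢 Ω) : Setoid Ω where
  r u v := ∃ x, 𝒢.src x = A.ρ u ∧ A.act x u = v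
  iseqv := by
    constructor
    · exact fun u => ⟨A.ρ u, 𝒢.src_unit _ (A.ρ_mem u), A.unit_act u⟩
    · rintro u v ⟨x, hx, rfl⟩
      refine ⟨𝒢.inv x, ?_, ?_⟩
      · rw [𝒢.src_inv, A.ρ_act x u hx]
      · rw [A.act_act _ x u hx (𝒢.src_inv x), 𝒢.inv_mul', hx, A.unit_act]
    · rintro u v w ⟨x, hx, rfl⟩ ⟨y, hy, rfl⟩
      have hyr : 𝒢.src y = 𝒢.rng x := by rw [hy, A.ρ_act x u hx]
      refine ⟨𝒢.mul y x, ?_, ?_⟩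
      · rw [𝒢.src_mul y x hyr, hx]
      · rw [← A.act_act y x u hx hyr]

end GroupoidLeftAction

/-- A right action of a topological groupoid `𝒢` on a space `Ω`, with fibre map `σ`. -/
structure GroupoidRightAction (𝒢 : TopGroupoid Γ) (Ω : Type*) [TopologicalSpace Ω] where
  σ : Ω → Γ
  act : Ω → Γ → Ω
  σ_mem : ∀ u, σ u ∈ 𝒢.unit
  continuous_σ : Continuous σ
  σ_surj : ∀ v ∈ 𝒢.unit, ∃ u, σ u = v
  open_σ : ∀ U : Set Ω, IsOpen U → ∃ V : Set Γ, IsOpen V ∧ σ '' U = V ∩ 𝒢.unit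
  continuous_act : ContinuousOn (fun p : Ω × Γ => act p.1 p.2) {p : Ω × Γ | σ p.1 = 𝒢.rng p.2}
  σ_act : ∀ u x, σ u = 𝒢.rng x → σ (act u x) = 𝒢.src x
  unit_act : ∀ u, act u (σ u) = u
  act_act : ∀ u x y, σ u = 𝒢.rng x → 𝒢.src x = 𝒢.rng y → act (act u x) y = act u (𝒢.mul x y)

namespace GroupoidRightAction

variable {𝒢 : TopGroupoid Γ} {Ω : Type*} [TopologicalSpace Ω]

/-- The action is free. -/
def Free (A : GroupoidRightAction 𝒢 Ω) : Prop :=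
  ∀ u x, A.σ u = 𝒢.rng x → A.act u x = u → x ∈ 𝒢.unit

/-- The action is proper. -/
def Proper (A : GroupoidRightAction 𝒢 Ω) : Prop :=
  ∀ K : Set (Ω × Ω), IsCompact K →
    IsCompact {p : Ω × Γ | A.σ p.1 = 𝒢.rng p.2 ∧ (A.act p.1 p.2, p.1) ∈ K}

/-- The orbit equivalence relation on `Ω`. -/
def setoid (A : GroupoidRightAction 𝒢 Ω) : Setoid Ω where
  r u v := ∃ x, A.σ u = 𝒢.rng x ∧ A.act u x = v
  iseqv := by
    constructor
    · exact fun u => ⟨A.σ u, (𝒢.rng_unit _ (A.σ_mem u)).symm, A.unit_act u⟩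
    · rintro u v ⟨x, hx, rfl⟩
      refine ⟨𝒢.inv x, ?_, ?_⟩
      · rw [𝒢.rng_inv, A.σ_act u x hx]
      · rw [A.act_act u x _ hx (𝒢.rng_inv x).symm, 𝒢.mul_inv', ← hx, A.unit_act]
    · rintro u v w ⟨x, hx, rfl⟩ ⟨y, hy, rfl⟩
      have hxy : 𝒢.src x = 𝒢.rng y := by rw [← A.σ_act u x hx, hy]
      refine ⟨𝒢.mul x y, ?_, ?_⟩
      · rw [𝒢.rng_mul x y hxy, hx]
      · rw [A.act_act u x y hx hxy]

end GroupoidRightAction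

end Actions

/-- A left Haar system on a topological groupoid: a family of Radon measures indexed by the
units, with support `r⁻¹(u)`, continuous in `u`, and left invariant. -/
def IsHaarSystem {Γ : Type*} [TopologicalSpace Γ] [MeasurableSpace Γ]
    (𝒢 : TopGroupoid Γ) (lam : Γ → Measure Γ) : Prop :=
  (∀ u ∈ 𝒢.unit, ∀ K : Set Γ, IsCompact K → lam u K < ⊤) ∧
  (∀ u ∈ 𝒢.unit, lam u {x | 𝒢.rng x ≠ u} = 0) ∧
  (∀ u ∈ 𝒢.unit, ∀ V : Set Γ, IsOpen V → (V ∩ 𝒢.rng ⁻¹' {u}).Nonempty → 0 < lam u V) ∧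
  (∀ f : Γ → ℝ, Continuous f → HasCompactSupport f →
    ContinuousOn (fun u => ∫ x, f x ∂(lam u)) 𝒢.unit) ∧
  (∀ x : Γ, ∀ f : Γ → ℝ, Continuous f → HasCompactSupport f →
    ∫ y, f (𝒢.mul x y) ∂(lam (𝒢.src x)) = ∫ y, f y ∂(lam (𝒢.rng x)))

/-!
Freeness and properness make `(x, h) ↦ (x·h, x)` an injective proper map, hence a closed
embedding, so the element `τ(a, b)` with `a·τ(a, b) = b` depends continuously on the pair `(a, b)`
of the orbit relation. An orbit `xH` with `s(x)H = r(y)H` thus has exactly one representative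
`x·τ(s x, r y)` composable with `y`, varying continuously with `(x, y)`, and `(xH)·y` is its
product with `y`. Choosing composable representatives reduces the action axioms to the groupoid
axioms of `Γ`, and continuity descends along the open quotient map `Γ × Γ → Γ/H × Γ`.
-/

theorem IsOpenQuotientMap.continuousOn_comp_iff {X Y Z : Type*} [TopologicalSpace X]
    [TopologicalSpace Y] [TopologicalSpace Z] {f : X → Y} (hf : IsOpenQuotientMap f)
    {g : Y → Z} {s : Set Y} : ContinuousOn (g ∘ f) (f ⁻¹' s) ↔ ContinuousOn g s := by
  refine ⟨fun h y hy => ?_, fun h x hx => (h (f x) hx).comp hf.continuous.continuousWithinAt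
    (Set.mapsTo_preimage f s)⟩
  obtain ⟨x, rfl⟩ := hf.surjective y
  have hmap : map f (𝓝[f ⁻¹' s] x) = 𝓝[s] (f x) := by
    rw [nhdsWithin, map_inf_principal_preimage, hf.map_nhds_eq, nhdsWithin]
  have hx : ContinuousWithinAt (g ∘ f) (f ⁻¹' s) x := h x hy
  rwa [ContinuousWithinAt, ← hmap, tendsto_map'_iff]

namespace GroupRightAction

variable {Γ H : Type*} [TopologicalSpace Γ] [TopologicalSpace H] [Group H]
  {𝒢 : TopGroupoid Γ} (A : GroupRightAction 𝒢 H)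

theorem act_act_inv (x : Γ) (h : H) : A.act (A.act x h) h⁻¹ = x := by
  rw [A.act_mul, mul_inv_cancel, A.act_one]

theorem isOpenQuotientMap_mk : IsOpenQuotientMap (Quotient.mk A.setoid) := by
  refine ⟨Quotient.mk_surjective, continuous_quot_mk, fun W hW => ?_⟩
  have hsat : Quotient.mk A.setoid ⁻¹' (Quotient.mk A.setoid '' W)
      = ⋃ h : H, (A.act · h) ⁻¹' W := by
    ext x
    simp only [Set.mem_preimage, Set.mem_image, Set.mem_iUnion]
    constructor
    · rintro ⟨w, hw, hwx⟩
      obtain ⟨h, rfl⟩ := Quotient.exact hwx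
      exact ⟨h⁻¹, (A.act_act_inv w h).symm ▸ hw⟩
    · rintro ⟨h, hx⟩
      exact ⟨A.act x h, hx, Quotient.sound ⟨h⁻¹, A.act_act_inv x h⟩⟩
  refine isOpen_coinduced.mpr (hsat ▸ ?_)
  exact isOpen_iUnion fun h => hW.preimage (A.continuous_act.comp (.prodMk_left h))

theorem image_mk_inter_unit (W : Set Γ) :
    Quotient.mk A.setoid '' (W ∩ 𝒢.unit)
      = Quotient.mk A.setoid '' W ∩ Quotient.mk A.setoid '' 𝒢.unit := by
  refine subset_antisymm (Set.image_inter_subset _ _ _) ?_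
  rintro _ ⟨⟨w, hw, rfl⟩, u, hu, huw⟩
  obtain ⟨h, rfl⟩ := Quotient.exact huw
  exact ⟨_, ⟨hw, A.unit_act u hu h⟩, rfl⟩

theorem Free.act_injective {A : GroupRightAction 𝒢 H} (hfree : A.Free) (x : Γ) :
    Function.Injective (A.act x) := fun h k hhk => by
  have hfix : A.act x (h * k⁻¹) = x := by rw [← A.act_mul, hhk, A.act_act_inv]
  exact mul_inv_eq_one.mp (hfree x _ hfix)

/-- The `h` with `a·h = b`; an arbitrary element when `a` and `b` lie in different orbits. -/
noncomputable def translation (a b : Γ) : H := Classical.epsilon fun h => A.act a h = b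

theorem act_translation {a b : Γ} (hab : ∃ h, A.act a h = b) : A.act a (A.translation a b) = b :=
  Classical.epsilon_spec hab

theorem Free.translation_act {A : GroupRightAction 𝒢 H} (hfree : A.Free) (a : Γ) (h : H) :
    A.translation a (A.act a h) = h :=
  hfree.act_injective a (A.act_translation ⟨h, rfl⟩)

theorem isInducing_act_prodMk [T2Space Γ] [LocallyCompactSpace Γ] {A : GroupRightAction 𝒢 H}
    (hfree : A.Free) (hproper : A.Proper) :
    IsInducing fun p : Γ × H => (A.act p.1 p.2, p.1) := by
  have hcont : Continuous fun p : Γ × H => (A.act p.1 p.2, p.1) :=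
    A.continuous_act.prodMk continuous_fst
  have hinj : Function.Injective fun p : Γ × H => (A.act p.1 p.2, p.1) := by
    rintro ⟨x, h⟩ ⟨y, k⟩ hxy
    simp only [Prod.mk.injEq] at hxy
    obtain ⟨hact, rfl⟩ := hxy
    rw [hfree.act_injective x hact]
  have hproperMap := isProperMap_iff_isCompact_preimage.mpr ⟨hcont, fun K hK => hproper K hK⟩
  exact (IsClosedEmbedding.of_continuous_injective_isClosedMap hcont hinj
    hproperMap.isClosedMap).isInducing

theorem continuousOn_translation [T2Space Γ] [LocallyCompactSpace Γ] {A : GroupRightAction 𝒢 H}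
    (hfree : A.Free) (hproper : A.Proper) :
    ContinuousOn (fun p : Γ × Γ => A.translation p.1 p.2) {p | ∃ h, A.act p.1 h = p.2} := by
  suffices ContinuousOn (fun p : Γ × Γ => (p.1, A.translation p.1 p.2))
      {p | ∃ h, A.act p.1 h = p.2} from continuous_snd.comp_continuousOn this
  rw [(isInducing_act_prodMk hfree hproper).continuousOn_iff]
  exact continuous_swap.continuousOn.congr fun p hp => Prod.ext (A.act_translation hp) rfl

theorem src_act_translation {x y : Γ} (hxy : ∃ h, A.act (𝒢.src x) h = 𝒢.rng y) :
    𝒢.src (A.act x (A.translation (𝒢.src x) (𝒢.rng y))) = 𝒢.rng y := by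
  rw [A.src_act, A.act_translation hxy]

/-- `(xH)·y` is computed with the representative of `xH` composable with `y`; the value is junk
when there is none. -/
noncomputable def quotientAct (q : Quotient A.setoid) (y : Γ) : Γ :=
  𝒢.mul (A.act q.out (A.translation (𝒢.src q.out) (𝒢.rng y))) y

theorem quotientAct_mk_of_src_eq (hfree : A.Free) {x y : Γ}
    (hxy : 𝒢.src x = 𝒢.rng y) : A.quotientAct (Quotient.mk A.setoid x) y = 𝒢.mul x y := by
  obtain ⟨h, hh⟩ : ∃ h, A.act (Quotient.mk A.setoid x).out h = x :=
    Quotient.exact (Quotient.out_eq (Quotient.mk A.setoid x))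
  have hsrc : 𝒢.rng y = A.act (𝒢.src (Quotient.mk A.setoid x).out) h := by
    rw [← hxy, ← A.src_act, hh]
  rw [quotientAct, hsrc, hfree.translation_act, hh]

theorem quotientAct_mk (hfree : A.Free) {x y : Γ}
    (hxy : ∃ h, A.act (𝒢.src x) h = 𝒢.rng y) :
    A.quotientAct (Quotient.mk A.setoid x) y
      = 𝒢.mul (A.act x (A.translation (𝒢.src x) (𝒢.rng y))) y := by
  rw [← A.quotientAct_mk_of_src_eq hfree (A.src_act_translation hxy)]
  exact congrArg (A.quotientAct · y) (Quotient.sound ⟨_, rfl⟩)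

variable (Q : TopGroupoid (Quotient A.setoid))

theorem exists_mk_eq_src_eq_rng
    (hQsrc : ∀ x : Γ, Q.src (Quotient.mk A.setoid x) = Quotient.mk A.setoid (𝒢.src x))
    {q : Quotient A.setoid} {y : Γ} (hqy : Q.src q = Quotient.mk A.setoid (𝒢.rng y)) :
    ∃ x, Quotient.mk A.setoid x = q ∧ 𝒢.src x = 𝒢.rng y := by
  obtain ⟨x, rfl⟩ := q.exists_rep
  rw [hQsrc] at hqy
  have hxy : ∃ h, A.act (𝒢.src x) h = 𝒢.rng y := Quotient.exact hqy
  exact ⟨A.act x (A.translation (𝒢.src x) (𝒢.rng y)),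
    (Quotient.sound (s := A.setoid) ⟨_, rfl⟩).symm, A.src_act_translation hxy⟩

theorem mk_rng_quotientAct (hfree : A.Free)
    (hQsrc : ∀ x : Γ, Q.src (Quotient.mk A.setoid x) = Quotient.mk A.setoid (𝒢.src x))
    (hQrng : ∀ x : Γ, Q.rng (Quotient.mk A.setoid x) = Quotient.mk A.setoid (𝒢.rng x))
    {q : Quotient A.setoid} {y : Γ} (hqy : Q.src q = Quotient.mk A.setoid (𝒢.rng y)) :
    Quotient.mk A.setoid (𝒢.rng (A.quotientAct q y)) = Q.rng q := by
  obtain ⟨x, rfl, hxy⟩ := A.exists_mk_eq_src_eq_rng Q hQsrc hqy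
  rw [A.quotientAct_mk_of_src_eq hfree hxy, 𝒢.rng_mul x y hxy, hQrng]

theorem quotientAct_quotientAct (hfree : A.Free)
    (hQsrc : ∀ x : Γ, Q.src (Quotient.mk A.setoid x) = Quotient.mk A.setoid (𝒢.src x))
    (hQrng : ∀ x : Γ, Q.rng (Quotient.mk A.setoid x) = Quotient.mk A.setoid (𝒢.rng x))
    (hQmul : ∀ x y : Γ, 𝒢.src x = 𝒢.rng y →
      Q.mul (Quotient.mk A.setoid x) (Quotient.mk A.setoid y) = Quotient.mk A.setoid (𝒢.mul x y))
    {q q' : Quotient A.setoid} {y : Γ} (hq'y : Q.src q' = Quotient.mk A.setoid (𝒢.rng y))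
    (hqq' : Q.src q = Q.rng q') :
    A.quotientAct q (A.quotientAct q' y) = A.quotientAct (Q.mul q q') y := by
  obtain ⟨x', rfl, hx'y⟩ := A.exists_mk_eq_src_eq_rng Q hQsrc hq'y
  obtain ⟨x, rfl, hxx'⟩ := A.exists_mk_eq_src_eq_rng Q hQsrc (hqq'.trans (hQrng x'))
  have hsrc_x : 𝒢.src x = 𝒢.rng (𝒢.mul x' y) := by rw [𝒢.rng_mul x' y hx'y, hxx']
  have hsrc_xx' : 𝒢.src (𝒢.mul x x') = 𝒢.rng y := by rw [𝒢.src_mul x x' hxx', hx'y]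
  rw [A.quotientAct_mk_of_src_eq hfree hx'y, A.quotientAct_mk_of_src_eq hfree hsrc_x,
    hQmul x x' hxx', A.quotientAct_mk_of_src_eq hfree hsrc_xx', 𝒢.mul_assoc' x x' y hxx' hx'y]

theorem continuousOn_quotientAct [T2Space Γ] [LocallyCompactSpace Γ]
    (hfree : A.Free) (hproper : A.Proper)
    (hQsrc : ∀ x : Γ, Q.src (Quotient.mk A.setoid x) = Quotient.mk A.setoid (𝒢.src x)) :
    ContinuousOn (fun p : Quotient A.setoid × Γ => A.quotientAct p.1 p.2)
      {p | Q.src p.1 = Quotient.mk A.setoid (𝒢.rng p.2)} := by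
  rw [← (A.isOpenQuotientMap_mk.prodMap .id).continuousOn_comp_iff]
  have hcomposable :
      Prod.map (Quotient.mk A.setoid) id ⁻¹' {p | Q.src p.1 = Quotient.mk A.setoid (𝒢.rng p.2)}
        = {p | ∃ h, A.act (𝒢.src p.1) h = 𝒢.rng p.2} := by
    ext p
    simp only [Set.mem_preimage, Prod.map_fst, Prod.map_snd, Set.mem_ofPred_eq, hQsrc,
      Quotient.eq]
    rfl
  rw [hcomposable]
  have htranslation : ContinuousOn (fun p : Γ × Γ => A.translation (𝒢.src p.1) (𝒢.rng p.2))
      {p | ∃ h, A.act (𝒢.src p.1) h = 𝒢.rng p.2} :=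
    (continuousOn_translation hfree hproper).comp
      ((𝒢.continuous_src.prodMap 𝒢.continuous_rng).continuousOn) fun _ hp => hp
  refine ContinuousOn.congr ?_ fun p hp => A.quotientAct_mk hfree hp
  exact 𝒢.continuous_mul.comp
    ((A.continuous_act.comp_continuousOn (continuousOn_fst.prodMk htranslation)).prodMk
      continuousOn_snd) fun p hp => A.src_act_translation hp

end GroupRightAction

theorem quotient_groupoid_acts_on_total_space_general
    {Γ H : Type*} [TopologicalSpace Γ] [T2Space Γ] [LocallyCompactSpace Γ]
    [TopologicalSpace H] [Group H]
    (𝒢 : TopGroupoid Γ) (RA : GroupRightAction 𝒢 H)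
    (hfree : RA.Free) (hproper : RA.Proper)
    (Q : TopGroupoid (Quotient RA.setoid))
    (hQunit : Q.unit = Quotient.mk RA.setoid '' 𝒢.unit)
    (hQrng : ∀ x : Γ, Q.rng (Quotient.mk RA.setoid x) = Quotient.mk RA.setoid (𝒢.rng x))
    (hQsrc : ∀ x : Γ, Q.src (Quotient.mk RA.setoid x) = Quotient.mk RA.setoid (𝒢.src x))
    (hQmul : ∀ x y : Γ, 𝒢.src x = 𝒢.rng y →
      Q.mul (Quotient.mk RA.setoid x) (Quotient.mk RA.setoid y)
        = Quotient.mk RA.setoid (𝒢.mul x y)) :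
    ∃ B : GroupoidLeftAction Q Γ,
      (∀ y : Γ, B.ρ y = Quotient.mk RA.setoid (𝒢.rng y)) ∧
      (∀ x y : Γ, 𝒢.src x = 𝒢.rng y →
        B.act (Quotient.mk RA.setoid x) y = 𝒢.mul x y) := by
  refine ⟨{ ρ := fun y => Quotient.mk RA.setoid (𝒢.rng y)
            act := RA.quotientAct
            ρ_mem := fun y => hQunit ▸ Set.mem_image_of_mem _ (𝒢.rng_mem y)
            continuous_ρ := continuous_quot_mk.comp 𝒢.continuous_rng
            ρ_surj := fun v hv => by
              obtain ⟨u, hu, rfl⟩ := hQunit ▸ hv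
              exact ⟨u, by rw [𝒢.rng_unit u hu]⟩
            open_ρ := fun U hU => by
              obtain ⟨W, hW, hWU⟩ := 𝒢.open_rng U hU
              refine ⟨_, RA.isOpenQuotientMap_mk.isOpenMap W hW, ?_⟩
              rw [hQunit, ← RA.image_mk_inter_unit, ← hWU, Set.image_image]
            continuous_act := RA.continuousOn_quotientAct Q hfree hproper hQsrc
            ρ_act := fun _ _ => RA.mk_rng_quotientAct Q hfree hQsrc hQrng
            unit_act := fun y => (RA.quotientAct_mk_of_src_eq hfree
              (𝒢.src_unit _ (𝒢.rng_mem y))).trans (𝒢.rng_mul_self y)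
            act_act := fun _ _ _ => RA.quotientAct_quotientAct Q hfree hQsrc hQrng hQmul },
    fun _ => rfl, fun _ _ => RA.quotientAct_mk_of_src_eq hfree⟩

/-- The quotient groupoid `Γ/H` acts on the left of the space `Γ`, with
fibre map `ρ(y) = r(y)·H`, via `(xH)·y = xy` whenever `s(x) = r(y)`. -/
theorem quotient_groupoid_acts_on_total_space
    {Γ H : Type*} [TopologicalSpace Γ] [T2Space Γ] [LocallyCompactSpace Γ]
    [TopologicalSpace H] [Group H] [IsTopologicalGroup H] [T2Space H] [LocallyCompactSpace H]
    (𝒢 : TopGroupoid Γ) (RA : GroupRightAction 𝒢 H)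
    (hfree : RA.Free) (hproper : RA.Proper)
    (Q : TopGroupoid (Quotient RA.setoid))
    (hQunit : Q.unit = Quotient.mk RA.setoid '' 𝒢.unit)
    (hQrng : ∀ x : Γ, Q.rng (Quotient.mk RA.setoid x) = Quotient.mk RA.setoid (𝒢.rng x))
    (hQsrc : ∀ x : Γ, Q.src (Quotient.mk RA.setoid x) = Quotient.mk RA.setoid (𝒢.src x))
    (hQmul : ∀ x y : Γ, 𝒢.src x = 𝒢.rng y →
      Q.mul (Quotient.mk RA.setoid x) (Quotient.mk RA.setoid y)
        = Quotient.mk RA.setoid (𝒢.mul x y))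
    (hQinv : ∀ x : Γ, Q.inv (Quotient.mk RA.setoid x) = Quotient.mk RA.setoid (𝒢.inv x)) :
    ∃ B : GroupoidLeftAction Q Γ,
      (∀ y : Γ, B.ρ y = Quotient.mk RA.setoid (𝒢.rng y)) ∧
      (∀ x y : Γ, 𝒢.src x = 𝒢.rng y →
        B.act (Quotient.mk RA.setoid x) y = 𝒢.mul x y) :=
  quotient_groupoid_acts_on_total_space_general 𝒢 RA hfree hproper Q hQunit hQrng hQsrc hQmul
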